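/- arXiv:2009.11041 — 2 statements merged into one kernel-verified Lean document; each statement's English description precedes it below -/
import Mathlib

section
/- (Hyperbolicity Lemma) Let F be a hyperbolic m-dimensional LFT with parameter (i, σ, p⃗, q⃗). Then for all x, y ∈ (pℤ_p)^m, |F^{-1}(x) − F^{-1}(y)|_p ≤ p^{-1} |x − y|_p, where for z = (z_1,…,z_m) ∈ ℚ_p^m we set |z|_p = max_{1≤j≤m} |z_j|_p. -/
/-!
On `(pℤ_p)^m` the common denominator `y_s + q_s` of `F⁻¹` has constant norm `|q_s|_p ≥ 1`,
because `|y_s|_p < 1 ≤ |q_s|_p`. Writing a coordinate of `F⁻¹` as `N(y) / (y_s + q_s)`, the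
ultrametric inequality bounds its variation by
`max (|N(x) - N(y)|_p, |N(x)|_p |x_s - y_s|_p) / |q_s|_p`, and conditions (ii)–(iv) of
hyperbolicity say precisely that both coefficients are at most `p⁻¹`.
-/

open MeasureTheory Filter Topology
open scoped Classical

noncomputable section

namespace PadicCF

variable (p : ℕ) [Fact p.Prime]

/-- `pℤ_p`, the maximal ideal of the `p`-adic integers, viewed inside `ℚ_p`. -/
def pZ : Set ℚ_[p] := {x | ‖x‖ ≤ (p : ℝ)⁻¹}

/-- `D_m`: tuples `(x_1, …, x_m)` such that `1, x_1, …, x_m` are linearly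
independent over `ℤ`. -/
def Dm (m : ℕ) : Set (Fin m → ℚ_[p]) :=
  {x | ∀ (c : ℤ) (a : Fin m → ℤ), (c : ℚ_[p]) + ∑ j, (a j : ℚ_[p]) * x j = 0 →
    c = 0 ∧ ∀ j, a j = 0}

/-- `D_m' = D_m ∩ (pℤ_p)^m`. -/
def Dm' (m : ℕ) : Set (Fin m → ℚ_[p]) := {x | x ∈ Dm p m ∧ ∀ j, x j ∈ pZ p}

variable {m : ℕ}

/-- The `m`-dimensional linear fractional transformation with parameter `(i, σ, pv, qv)`. -/
def LFT (i : Fin m) (σ : Equiv.Perm (Fin m)) (pv qv : Fin m → ℚ)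
    (x : Fin m → ℚ_[p]) : Fin m → ℚ_[p] := fun k =>
  if k = σ⁻¹ i then (pv k : ℚ_[p]) / x i - (qv k : ℚ_[p])
  else (pv k : ℚ_[p]) * x (σ k) / x i - (qv k : ℚ_[p])

/-- The inverse of the LFT with parameter `(i, σ, pv, qv)`, given by the explicit formulas
`x_i = p_s/(y_s + q_s)` and `x_k = p_s (y_t + q_t) / (p_t (y_s + q_s))` for `k ≠ i`,
where `s = σ⁻¹ i`, `t = σ⁻¹ k`. -/
def LFTinv (i : Fin m) (σ : Equiv.Perm (Fin m)) (pv qv : Fin m → ℚ)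
    (y : Fin m → ℚ_[p]) : Fin m → ℚ_[p] := fun k =>
  if k = i then (pv (σ⁻¹ i) : ℚ_[p]) / (y (σ⁻¹ i) + (qv (σ⁻¹ i) : ℚ_[p]))
  else (pv (σ⁻¹ i) : ℚ_[p]) * (y (σ⁻¹ k) + (qv (σ⁻¹ k) : ℚ_[p])) /
        ((pv (σ⁻¹ k) : ℚ_[p]) * (y (σ⁻¹ i) + (qv (σ⁻¹ i) : ℚ_[p])))

/-- Hyperbolicity of an LFT, Definition 2.6 of the paper.  Here `ord` is `padicValRat p`;
the case `q_k = 0` (where `ord q_k = ∞` by convention) is listed explicitly in (iv). -/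
def Hyperbolic (i : Fin m) (σ : Equiv.Perm (Fin m)) (pv qv : Fin m → ℚ) : Prop :=
  (∀ k, pv k ≠ 0 ∧ 0 ≤ padicValRat p (pv k)) ∧
  (qv (σ⁻¹ i) ≠ 0 ∧ padicValRat p (qv (σ⁻¹ i)) ≤ 0 ∧
    0 < padicValRat p (pv (σ⁻¹ i) / qv (σ⁻¹ i))) ∧
  (∀ k, k ≠ σ⁻¹ i → qv k ≠ 0 → padicValRat p (qv k) ≤ 0 →
    padicValRat p (pv k / qv k) < padicValRat p (pv (σ⁻¹ i) / qv (σ⁻¹ i))) ∧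
  (∀ k, k ≠ σ⁻¹ i → (qv k = 0 ∨ 0 < padicValRat p (qv k)) →
    padicValRat p (pv k) < padicValRat p (pv (σ⁻¹ i) / qv (σ⁻¹ i)))

/-- `F⁻¹(D_m')`, i.e. the image of `D_m'` under the (formula-defined) inverse of the LFT. -/
def invImg (i : Fin m) (σ : Equiv.Perm (Fin m)) (pv qv : Fin m → ℚ) :
    Set (Fin m → ℚ_[p]) := LFTinv p i σ pv qv '' Dm' p m

/-- A family of hyperbolic LFTs indexed by `Λ` is an `m`-dimensional continued fraction
system if the sets `F_λ⁻¹(D_m')` form a partition of `D_m'`. -/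
def IsCFSystem (m : ℕ) {Λ : Type*} (iF : Λ → Fin m) (σF : Λ → Equiv.Perm (Fin m))
    (pF qF : Λ → Fin m → ℚ) : Prop :=
  (∀ l, Hyperbolic p (iF l) (σF l) (pF l) (qF l)) ∧
  (⋃ l, invImg p (iF l) (σF l) (pF l) (qF l)) = Dm' p m ∧
  (Pairwise fun l l' => Disjoint (invImg p (iF l) (σF l) (pF l) (qF l))
      (invImg p (iF l') (σF l') (pF l') (qF l')))

/-- The sup-norm `|z|_p = max_j |z_j|_p` on `ℚ_p^m`. -/
def supNorm (z : Fin m → ℚ_[p]) : NNReal := Finset.univ.sup fun j => ‖z j‖₊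

/-- `v ∈ ℚ` is the integral part of `α ∈ ℚ_p` if it is of the form
`∑_{n=0}^{N} d_n p^{-n}` with digits `d_n ∈ {0, …, p-1}` and `α - v ∈ pℤ_p`. -/
def IsIntegralPart (α : ℚ_[p]) (v : ℚ) : Prop :=
  (∃ N : ℕ, ∃ d : ℕ → ℕ, (∀ n, d n < p) ∧
      v = ∑ n ∈ Finset.range (N + 1), (d n : ℚ) / (p : ℚ) ^ n) ∧
  ‖α - (v : ℚ_[p])‖ ≤ (p : ℝ)⁻¹

/-- The integral part `⌊α⌋_p ∈ ℚ` of a `p`-adic number. -/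
def padicFloor (α : ℚ_[p]) : ℚ :=
  if h : ∃ v : ℚ, IsIntegralPart p α v then h.choose else 0

/-- `J_N`: rationals `∑_{n=0}^{N} c_n p^{-n}` with digits `c_n ∈ {0,…,p-1}` and `c_N ≠ 0`. -/
def Jset (N : ℕ) : Set ℚ :=
  {v | ∃ c : ℕ → ℕ, (∀ n, c n < p) ∧ c N ≠ 0 ∧
      v = ∑ n ∈ Finset.range (N + 1), (c n : ℚ) / (p : ℚ) ^ n}

/-- The exponent `k = max(ord_p x - ℓ, 0)`, with `k = 0` when `ℓ = ∞`. -/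
def kexp (ℓ : ℕ∞) (x : ℚ_[p]) : ℤ :=
  if ℓ = ⊤ then 0 else max (x.valuation - ((WithTop.untopD 0 ℓ : ℕ) : ℤ)) 0

/-- The transformation `T_ℓ : pℤ_p → pℤ_p`, `T_ℓ(x) = p^k/x - ⌊p^k/x⌋_p` with
`k = max(ord_p x - ℓ, 0)`, `T_ℓ(0) = 0`. -/
def Tell (ℓ : ℕ∞) (x : ℚ_[p]) : ℚ_[p] :=
  if x = 0 then 0
  else (p : ℚ_[p]) ^ kexp p ℓ x / x - (padicFloor p ((p : ℚ_[p]) ^ kexp p ℓ x / x) : ℚ_[p])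

/-- The one-dimensional set `D_1' ⊆ pℤ_p` (elements of `pℤ_p` irrational over `ℤ`). -/
def D1 : Set ℚ_[p] :=
  {x | (∀ c a : ℤ, (c : ℚ_[p]) + (a : ℚ_[p]) * x = 0 → c = 0 ∧ a = 0) ∧ x ∈ pZ p}

/-- Index set of the continued fraction system of `T_ℓ`:
pairs `(k, v)` with `k > 0, v ∈ J_ℓ`, or `k = 0` and `v ∈ J_1 ∪ ⋯ ∪ J_ℓ`. -/
def SysIndex (ℓ : ℕ∞) : Set (ℕ × ℚ) :=
  {kv | (0 < kv.1 ∧ ∃ n : ℕ, (n : ℕ∞) = ℓ ∧ kv.2 ∈ Jset p n) ∨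
        (kv.1 = 0 ∧ ∃ n : ℕ, 1 ≤ n ∧ (n : ℕ∞) ≤ ℓ ∧ kv.2 ∈ Jset p n)}

/-- The exponent `r = max(-ℓ - ord_p(x_{k+1}) + ord_p(x_1), 0)` (`0` if `ℓ = ∞`). -/
def rexp (ℓ : ℕ∞) (x1 xk : ℚ_[p]) : ℤ :=
  if ℓ = ⊤ then 0 else max (-((WithTop.untopD 0 ℓ : ℕ) : ℤ) - xk.valuation + x1.valuation) 0

/-- The multidimensional transformation `T_{ℓ,m}` on `D_m'`. -/
def Tellm (ℓ : ℕ∞) (x : Fin m → ℚ_[p]) : Fin m → ℚ_[p] := fun k =>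
  if h : (k : ℕ) + 1 = m then Tell p ℓ (x ⟨0, k.pos⟩)
  else
    (p : ℚ_[p]) ^ rexp p ℓ (x ⟨0, k.pos⟩)
        (x ⟨(k : ℕ) + 1, lt_of_le_of_ne (Nat.succ_le_of_lt k.isLt) h⟩) *
        x ⟨(k : ℕ) + 1, lt_of_le_of_ne (Nat.succ_le_of_lt k.isLt) h⟩ / x ⟨0, k.pos⟩ -
      (padicFloor p
        ((p : ℚ_[p]) ^ rexp p ℓ (x ⟨0, k.pos⟩)
            (x ⟨(k : ℕ) + 1, lt_of_le_of_ne (Nat.succ_le_of_lt k.isLt) h⟩) *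
          x ⟨(k : ℕ) + 1, lt_of_le_of_ne (Nat.succ_le_of_lt k.isLt) h⟩ / x ⟨0, k.pos⟩) : ℚ_[p])

/-- The vector of powers `p⃗^{(ℓ,x)}` of Definition 3.13. -/
def pParam (ℓ : ℕ∞) (x : Fin m → ℚ_[p]) (k : Fin m) : ℚ :=
  if ℓ = ⊤ then 1
  else if h : (k : ℕ) + 1 = m then
    (p : ℚ) ^ max (-((WithTop.untopD 0 ℓ : ℕ) : ℤ) + (x ⟨0, k.pos⟩).valuation) 0
  else
    (p : ℚ) ^ max (-((WithTop.untopD 0 ℓ : ℕ) : ℤ) -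
      (x ⟨(k : ℕ) + 1, lt_of_le_of_ne (Nat.succ_le_of_lt k.isLt) h⟩).valuation +
      (x ⟨0, k.pos⟩).valuation) 0

/-- The vector `q⃗^{(ℓ,x)}` of Definition 3.13. -/
def qParam (ℓ : ℕ∞) (x : Fin m → ℚ_[p]) (k : Fin m) : ℚ :=
  if h : (k : ℕ) + 1 = m then padicFloor p ((pParam p ℓ x k : ℚ_[p]) / x ⟨0, k.pos⟩)
  else padicFloor p ((pParam p ℓ x k : ℚ_[p]) *
    x ⟨(k : ℕ) + 1, lt_of_le_of_ne (Nat.succ_le_of_lt k.isLt) h⟩ / x ⟨0, k.pos⟩)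

/-- The `j`-th convergent `π(α; j) = F⁻¹_{ψ_0} ∘ ⋯ ∘ F⁻¹_{ψ_j} (0̄)`. -/
def convergent (Finv : ℕ → (Fin m → ℚ_[p]) → Fin m → ℚ_[p]) (j : ℕ) : Fin m → ℚ_[p] :=
  (List.range (j + 1)).foldr (fun t acc => Finv t acc) 0

/-- The exponent `h = max_k (ord_p(p_s) - ord_p(p_k))` of Section 5. -/
def hVal (i : Fin m) (σ : Equiv.Perm (Fin m)) (pv : Fin m → ℚ) : ℤ :=
  Finset.univ.sup' ⟨i, Finset.mem_univ i⟩
    fun k => padicValRat p (pv (σ⁻¹ i)) - padicValRat p (pv k)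

/-- The cylinders `V_k^{(y)}` of Section 5. -/
def Vset (i : Fin m) (σ : Equiv.Perm (Fin m)) (pv qv : Fin m → ℚ) (n : ℕ)
    (a : Fin m → ℚ_[p]) (y : ℕ) (k : Fin m) : Set ℚ_[p] :=
  if k = i then
    {t | ∃ w : ℚ_[p], ‖w‖ ≤ (p : ℝ) ^ (-(hVal p i σ pv)) ∧
      t = (pv (σ⁻¹ i) : ℚ_[p]) / (a (σ⁻¹ i) + (qv (σ⁻¹ i) : ℚ_[p])) +
        (p : ℚ_[p]) ^ ((n : ℤ) + padicValRat p (pv (σ⁻¹ i)) -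
          2 * padicValRat p (qv (σ⁻¹ i))) * ((y : ℚ_[p]) + w)}
  else
    {t | ∃ w : ℚ_[p], ‖w‖ ≤ (p : ℝ) ^ (-(n : ℤ)) ∧
      t = ((pv (σ⁻¹ i) : ℚ_[p]) / (a (σ⁻¹ i) + (qv (σ⁻¹ i) : ℚ_[p])) +
        (p : ℚ_[p]) ^ ((n : ℤ) + padicValRat p (pv (σ⁻¹ i)) -
          2 * padicValRat p (qv (σ⁻¹ i))) * (y : ℚ_[p])) *
        (a (σ⁻¹ k) + (qv (σ⁻¹ k) : ℚ_[p])) / (pv (σ⁻¹ k) : ℚ_[p])}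

end PadicCF

namespace PadicCF

open MeasureTheory Filter Topology
open scoped ENNReal NNReal

variable (p : ℕ) [Fact p.Prime]

section Ultrametric

variable {K : Type*} [NormedField K] [IsUltrametricDist K]

lemma norm_div_sub_div_le (U V : K) {u v : K} (hu : u ≠ 0) (hv : v ≠ 0) :
    ‖U / u - V / v‖ ≤ max (‖U - V‖ / ‖v‖) (‖U‖ * ‖u - v‖ / (‖u‖ * ‖v‖)) := by
  have h : U / u - V / v = (U - V) / v + U * (v - u) / (u * v) := by
    field_simp
    ring
  rw [h]
  refine (IsUltrametricDist.norm_add_le_max _ _).trans_eq ?_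
  rw [norm_div, norm_div, norm_mul, norm_mul, norm_sub_rev v u]

lemma norm_add_eq_right_of_norm_lt {a b : K} (h : ‖a‖ < ‖b‖) : ‖a + b‖ = ‖b‖ := by
  rw [IsUltrametricDist.norm_add_eq_max_of_norm_ne_norm h.ne, max_eq_right h.le]

lemma norm_add_le_max_one {a b : K} (ha : ‖a‖ ≤ 1) : ‖a + b‖ ≤ max 1 ‖b‖ :=
  (IsUltrametricDist.norm_add_le_max a b).trans (max_le_max_right _ ha)

end Ultrametric

lemma inv_natCast_lt_one : (p : ℝ)⁻¹ < 1 :=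
  inv_lt_one_of_one_lt₀ (mod_cast (Fact.out : p.Prime).one_lt)

lemma norm_le_one_of_mem_pZ {x : ℚ_[p]} (hx : x ∈ pZ p) : ‖x‖ ≤ 1 :=
  le_trans hx (inv_natCast_lt_one p).le

lemma supNorm_eq_nnnorm {m : ℕ} (z : Fin m → ℚ_[p]) : supNorm p z = ‖z‖₊ :=
  (Pi.nnnorm_def z).symm

section RatCast

variable {p}

lemma norm_ratCast_eq_zpow {q : ℚ} (hq : q ≠ 0) :
    ‖(q : ℚ_[p])‖ = (p : ℝ) ^ (-padicValRat p q) := by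
  rw [Padic.norm_eq_zpow_neg_valuation (mod_cast hq), Padic.valuation_ratCast]

lemma norm_ratCast_le_zpow_mul {a b : ℚ} (ha : a ≠ 0) (hb : b ≠ 0) {n : ℤ}
    (h : n + padicValRat p b ≤ padicValRat p a) :
    ‖(a : ℚ_[p])‖ ≤ (p : ℝ) ^ (-n) * ‖(b : ℚ_[p])‖ := by
  have hp : (1 : ℝ) < p := mod_cast (Fact.out : p.Prime).one_lt
  rw [norm_ratCast_eq_zpow ha, norm_ratCast_eq_zpow hb, ← zpow_add₀ (by positivity)]
  exact zpow_le_zpow_right₀ hp.le (by omega)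

lemma norm_ratCast_le_of_padicValRat_le {a b : ℚ} (ha : a ≠ 0) (hb : b ≠ 0)
    (h : padicValRat p b ≤ padicValRat p a) : ‖(a : ℚ_[p])‖ ≤ ‖(b : ℚ_[p])‖ := by
  simpa using norm_ratCast_le_zpow_mul (p := p) (n := 0) ha hb (by omega)

lemma norm_ratCast_le_inv_mul_of_padicValRat_lt {a b : ℚ} (ha : a ≠ 0) (hb : b ≠ 0)
    (h : padicValRat p b < padicValRat p a) : ‖(a : ℚ_[p])‖ ≤ (p : ℝ)⁻¹ * ‖(b : ℚ_[p])‖ := by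
  simpa using norm_ratCast_le_zpow_mul (p := p) (n := 1) ha hb (by omega)

end RatCast

namespace Hyperbolic

variable {p} {m : ℕ} {i : Fin m} {σ : Equiv.Perm (Fin m)} {pv qv : Fin m → ℚ}

lemma one_le_norm_qv (hF : Hyperbolic p i σ pv qv) : 1 ≤ ‖(qv (σ⁻¹ i) : ℚ_[p])‖ := by
  simpa using norm_ratCast_le_of_padicValRat_le (p := p) one_ne_zero hF.2.1.1
    (by simpa using hF.2.1.2.1)

lemma norm_pv_div_norm_qv_le (hF : Hyperbolic p i σ pv qv) :
    ‖(pv (σ⁻¹ i) : ℚ_[p])‖ / ‖(qv (σ⁻¹ i) : ℚ_[p])‖ ≤ (p : ℝ)⁻¹ := by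
  have h := norm_ratCast_le_inv_mul_of_padicValRat_lt (p := p)
    (div_ne_zero (hF.1 _).1 hF.2.1.1) one_ne_zero (by simpa using hF.2.1.2.2)
  simpa [norm_div] using h

lemma norm_pv_div_norm_qv_mul_le (hF : Hyperbolic p i σ pv qv) {t : Fin m} (ht : t ≠ σ⁻¹ i) :
    ‖(pv (σ⁻¹ i) : ℚ_[p])‖ / ‖(qv (σ⁻¹ i) : ℚ_[p])‖ * max 1 ‖(qv t : ℚ_[p])‖ ≤
      (p : ℝ)⁻¹ * ‖(pv t : ℚ_[p])‖ := by
  obtain ⟨hpv, ⟨hqs, -, -⟩, hlarge, hsmall⟩ := hF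
  have hps := (hpv (σ⁻¹ i)).1
  have hpt := (hpv t).1
  by_cases hq : qv t ≠ 0 ∧ padicValRat p (qv t) ≤ 0
  · obtain ⟨hqt, hval⟩ := hq
    have h1 : 1 ≤ ‖(qv t : ℚ_[p])‖ := by
      simpa using norm_ratCast_le_of_padicValRat_le (p := p) one_ne_zero hqt
        (by simpa using hval)
    have h := norm_ratCast_le_inv_mul_of_padicValRat_lt (p := p)
      (div_ne_zero hps hqs) (div_ne_zero hpt hqt) (hlarge t ht hqt hval)
    simp only [Rat.cast_div, norm_div] at h
    rw [max_eq_right h1]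
    calc _ ≤ (p : ℝ)⁻¹ * (‖(pv t : ℚ_[p])‖ / ‖(qv t : ℚ_[p])‖) * ‖(qv t : ℚ_[p])‖ := by gcongr
      _ = _ := by field_simp
  · have hq' : qv t = 0 ∨ 0 < padicValRat p (qv t) := by
      rwa [not_and_or, not_not, not_le] at hq
    have h1 : ‖(qv t : ℚ_[p])‖ ≤ 1 := by
      rcases hq' with h0 | hpos
      · simp [h0]
      · have hqt : qv t ≠ 0 := fun h0 => by simp [h0] at hpos
        simpa using norm_ratCast_le_of_padicValRat_le (p := p) hqt one_ne_zero
          (by simpa using hpos.le)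
    have h := norm_ratCast_le_inv_mul_of_padicValRat_lt (p := p)
      (div_ne_zero hps hqs) hpt (hsmall t ht hq')
    rw [max_eq_left h1, mul_one]
    simpa only [Rat.cast_div, norm_div] using h

lemma norm_add_qv_eq (hF : Hyperbolic p i σ pv qv) {a : ℚ_[p]} (ha : a ∈ pZ p) :
    ‖a + qv (σ⁻¹ i)‖ = ‖(qv (σ⁻¹ i) : ℚ_[p])‖ :=
  norm_add_eq_right_of_norm_lt (ha.trans_lt ((inv_natCast_lt_one p).trans_le hF.one_le_norm_qv))

lemma add_qv_ne_zero (hF : Hyperbolic p i σ pv qv) {a : ℚ_[p]} (ha : a ∈ pZ p) :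
    a + qv (σ⁻¹ i) ≠ 0 := by
  rw [← norm_pos_iff, hF.norm_add_qv_eq ha]
  exact one_pos.trans_le hF.one_le_norm_qv

lemma norm_div_add_qv_sub_div_add_qv_le (hF : Hyperbolic p i σ pv qv) (U V : ℚ_[p])
    {a b : ℚ_[p]} (ha : a ∈ pZ p) (hb : b ∈ pZ p) :
    ‖U / (a + qv (σ⁻¹ i)) - V / (b + qv (σ⁻¹ i))‖ ≤
      max (‖U - V‖ / ‖(qv (σ⁻¹ i) : ℚ_[p])‖) (‖U‖ / ‖(qv (σ⁻¹ i) : ℚ_[p])‖ * ‖a - b‖) := by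
  refine (norm_div_sub_div_le U V (hF.add_qv_ne_zero ha) (hF.add_qv_ne_zero hb)).trans ?_
  rw [hF.norm_add_qv_eq ha, hF.norm_add_qv_eq hb, add_sub_add_right_eq_sub]
  refine max_le_max le_rfl ?_
  calc ‖U‖ * ‖a - b‖ / (‖(qv (σ⁻¹ i) : ℚ_[p])‖ * ‖(qv (σ⁻¹ i) : ℚ_[p])‖)
      = ‖U‖ / ‖(qv (σ⁻¹ i) : ℚ_[p])‖ * ‖a - b‖ / ‖(qv (σ⁻¹ i) : ℚ_[p])‖ := by ring
    _ ≤ ‖U‖ / ‖(qv (σ⁻¹ i) : ℚ_[p])‖ * ‖a - b‖ := div_le_self (by positivity) hF.one_le_norm_qv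

variable {x y : Fin m → ℚ_[p]}

lemma norm_LFTinv_sub_apply_self_le (hF : Hyperbolic p i σ pv qv) (hx : ∀ j, x j ∈ pZ p)
    (hy : ∀ j, y j ∈ pZ p) :
    ‖LFTinv p i σ pv qv x i - LFTinv p i σ pv qv y i‖ ≤ (p : ℝ)⁻¹ * ‖x - y‖ := by
  simp only [LFTinv]
  refine (hF.norm_div_add_qv_sub_div_add_qv_le _ _ (hx _) (hy _)).trans (max_le ?_ ?_)
  · rw [sub_self, norm_zero, zero_div]
    positivity
  · exact mul_le_mul hF.norm_pv_div_norm_qv_le (norm_le_pi_norm (x - y) _) (norm_nonneg _)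
      (by positivity)

lemma norm_LFTinv_sub_apply_le_of_ne (hF : Hyperbolic p i σ pv qv) (hx : ∀ j, x j ∈ pZ p)
    (hy : ∀ j, y j ∈ pZ p) {k : Fin m} (hk : k ≠ i) :
    ‖LFTinv p i σ pv qv x k - LFTinv p i σ pv qv y k‖ ≤ (p : ℝ)⁻¹ * ‖x - y‖ := by
  set s := σ⁻¹ i
  set t := σ⁻¹ k
  have hpt : 0 < ‖(pv t : ℚ_[p])‖ := norm_pos_iff.2 (mod_cast (hF.1 t).1)
  set c := ‖(pv s : ℚ_[p])‖ / ‖(qv s : ℚ_[p])‖ / ‖(pv t : ℚ_[p])‖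
  have hc : c * max 1 ‖(qv t : ℚ_[p])‖ ≤ (p : ℝ)⁻¹ := by
    rw [div_mul_eq_mul_div, div_le_iff₀ hpt]
    exact hF.norm_pv_div_norm_qv_mul_le (σ⁻¹.injective.ne hk)
  have hxt : ‖x t + qv t‖ ≤ max 1 ‖(qv t : ℚ_[p])‖ :=
    norm_add_le_max_one (norm_le_one_of_mem_pZ p (hx t))
  simp only [LFTinv, if_neg hk, div_mul_eq_div_div]
  refine (hF.norm_div_add_qv_sub_div_add_qv_le _ _ (hx _) (hy _)).trans (max_le ?_ ?_)
  · rw [← sub_div, ← mul_sub, add_sub_add_right_eq_sub]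
    calc ‖(pv s : ℚ_[p]) * (x t - y t) / pv t‖ / ‖(qv s : ℚ_[p])‖ = c * ‖x t - y t‖ := by
          rw [norm_div, norm_mul]
          ring
      _ ≤ (p : ℝ)⁻¹ * ‖x - y‖ :=
          mul_le_mul ((le_mul_of_one_le_right (by positivity) (le_max_left _ _)).trans hc)
            (norm_le_pi_norm (x - y) t) (norm_nonneg _) (by positivity)
  · calc ‖(pv s : ℚ_[p]) * (x t + qv t) / pv t‖ / ‖(qv s : ℚ_[p])‖ * ‖x s - y s‖
        = c * ‖x t + qv t‖ * ‖x s - y s‖ := by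
          rw [norm_div, norm_mul]
          ring
      _ ≤ c * max 1 ‖(qv t : ℚ_[p])‖ * ‖x - y‖ := by
          gcongr
          exact norm_le_pi_norm (x - y) s
      _ ≤ (p : ℝ)⁻¹ * ‖x - y‖ := by gcongr

lemma norm_LFTinv_sub_apply_le (hF : Hyperbolic p i σ pv qv) (hx : ∀ j, x j ∈ pZ p)
    (hy : ∀ j, y j ∈ pZ p) (k : Fin m) :
    ‖LFTinv p i σ pv qv x k - LFTinv p i σ pv qv y k‖ ≤ (p : ℝ)⁻¹ * ‖x - y‖ := by
  rcases eq_or_ne k i with rfl | hk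
  · exact hF.norm_LFTinv_sub_apply_self_le hx hy
  · exact hF.norm_LFTinv_sub_apply_le_of_ne hx hy hk

end Hyperbolic

theorem hyperbolicity_lemma (m : ℕ) (i : Fin m) (σ : Equiv.Perm (Fin m))
    (pv qv : Fin m → ℚ) (hF : Hyperbolic p i σ pv qv)
    (x y : Fin m → ℚ_[p]) (hx : ∀ j, x j ∈ pZ p) (hy : ∀ j, y j ∈ pZ p) :
    supNorm p (LFTinv p i σ pv qv x - LFTinv p i σ pv qv y) ≤
      (p : NNReal)⁻¹ * supNorm p (x - y) := by
  rw [supNorm_eq_nnnorm, supNorm_eq_nnnorm, pi_nnnorm_le_iff]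
  intro k
  rw [← NNReal.coe_le_coe]
  push_cast
  exact hF.norm_LFTinv_sub_apply_le hx hy k

end PadicCF
end
end

section
/- For every ℓ ∈ ℤ_{≥0} ∪ {∞} and every x ∈ D_m', the m-dimensional LFT F^{(ℓ,x)} with parameter (1, σ', p⃗^{(ℓ,x)}, q⃗^{(ℓ,x)}) is hyperbolic. -/
open MeasureTheory Filter Topology
open scoped Classical

noncomputable section

namespace PadicCF

open MeasureTheory Filter Topology
open scoped ENNReal NNReal

variable (p : ℕ) [Fact p.Prime]

/-!
Each `p_k^{(ℓ,x)}` is a power `p^e` with `0 ≤ e ≤ ord x_1`, and `e < ord x_1` unless `k = m`,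
the index `σ'⁻¹(1)`. The integral part `⌊y⌋_p` differs from `y` by an element of `pℤ_p`, so
`ord ⌊y⌋_p = ord y` when `ord y ≤ 0`, and `ord ⌊y⌋_p ≥ min (ord y) 1` in general.
For `k = m` we have `ord (p_m / x_1) ≤ 0`, hence `ord (p_m / q_m) = ord x_1 > 0`. For `k ≠ m`,
`ord (p_k x_{k+1} / x_1) ≥ ord p_k + 1 - ord x_1`, which gives `ord (p_k / q_k) < ord x_1`.
-/

section

variable {p}

theorem one_lt_cast_prime : 1 < (p : ℝ) := mod_cast (Fact.out : p.Prime).one_lt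

theorem norm_le_inv_iff_one_le_valuation {z : ℚ_[p]} (hz : z ≠ 0) :
    ‖z‖ ≤ (p : ℝ)⁻¹ ↔ 1 ≤ z.valuation := by
  rw [Padic.norm_eq_zpow_neg_valuation hz, ← zpow_neg_one,
    zpow_le_zpow_iff_right₀ one_lt_cast_prime]
  omega

theorem one_le_norm_iff_valuation_nonpos {z : ℚ_[p]} (hz : z ≠ 0) :
    1 ≤ ‖z‖ ↔ z.valuation ≤ 0 := by
  rw [Padic.norm_eq_zpow_neg_valuation hz, one_le_zpow_iff_right₀ one_lt_cast_prime]
  omega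

theorem valuation_eq_of_norm_eq {z w : ℚ_[p]} (hz : z ≠ 0) (hw : w ≠ 0) (h : ‖z‖ = ‖w‖) :
    z.valuation = w.valuation := by
  rw [Padic.norm_eq_zpow_neg_valuation hz, Padic.norm_eq_zpow_neg_valuation hw,
    zpow_right_inj₀ (zero_lt_one.trans one_lt_cast_prime) one_lt_cast_prime.ne'] at h
  omega

theorem padicValRat_prime_zpow (e : ℤ) : padicValRat p ((p : ℚ) ^ e) = e := by
  simp [padicValRat.self (Fact.out : p.Prime).one_lt]

theorem sum_digit_mul_pow_eq_mod (b a K : ℕ) :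
    ∑ j ∈ Finset.range K, (a / b ^ j % b) * b ^ j = a % b ^ K := by
  induction K with
  | zero => simp [Nat.mod_one]
  | succ K ih =>
    rw [Finset.sum_range_succ, ih, pow_succ, Nat.mod_mul]
    ring

theorem natCast_div_pow_eq_sum_digits {b : ℕ} (hb : 0 < b) {a N : ℕ} (ha : a < b ^ (N + 1)) :
    (a : ℚ) / (b : ℚ) ^ N =
      ∑ n ∈ Finset.range (N + 1), ((a / b ^ (N - n) % b : ℕ) : ℚ) / (b : ℚ) ^ n := by
  rw [← Finset.sum_range_reflect]
  have hterm : ∀ j ∈ Finset.range (N + 1),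
      ((a / b ^ (N - (N + 1 - 1 - j)) % b : ℕ) : ℚ) / (b : ℚ) ^ (N + 1 - 1 - j) =
        (((a / b ^ j % b) * b ^ j : ℕ) : ℚ) / (b : ℚ) ^ N := by
    intro j hj
    rw [Finset.mem_range] at hj
    rw [show N + 1 - 1 - j = N - j by omega, show N - (N - j) = j by omega,
      pow_sub₀ (b : ℚ) (by positivity) (by omega)]
    push_cast
    field_simp
  rw [Finset.sum_congr rfl hterm, ← Finset.sum_div, ← Nat.cast_sum, sum_digit_mul_pow_eq_mod,
    Nat.mod_eq_of_lt ha]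

theorem exists_norm_mul_pow_le_one (α : ℚ_[p]) : ∃ N : ℕ, ‖α * (p : ℚ_[p]) ^ N‖ ≤ 1 := by
  rcases eq_or_ne α 0 with rfl | hα
  · exact ⟨0, by simp⟩
  refine ⟨(-α.valuation).toNat, ?_⟩
  rw [Padic.norm_le_one_iff_val_nonneg,
    Padic.valuation_mul hα (pow_ne_zero _ (by simp [(Fact.out : p.Prime).ne_zero])),
    Padic.valuation_pow, Padic.valuation_p]
  omega

theorem exists_natCast_div_pow_near (α : ℚ_[p]) :
    ∃ N a : ℕ, a < p ^ (N + 1) ∧ ‖α - (a : ℚ_[p]) / (p : ℚ_[p]) ^ N‖ ≤ (p : ℝ)⁻¹ := by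
  obtain ⟨N, hN⟩ := exists_norm_mul_pow_le_one α
  set z : ℤ_[p] := ⟨α * (p : ℚ_[p]) ^ N, hN⟩
  set a := z.appr (N + 1)
  refine ⟨N, a, z.appr_lt (N + 1), ?_⟩
  have happr : ‖α * (p : ℚ_[p]) ^ N - a‖ ≤ (p : ℝ) ^ (-((N + 1 : ℕ) : ℤ)) := by
    have h := (PadicInt.norm_le_pow_iff_mem_span_pow _ _).mpr (PadicInt.appr_spec (N + 1) z)
    rwa [PadicInt.norm_def, PadicInt.coe_sub, PadicInt.coe_natCast] at h
  have hp : (p : ℚ_[p]) ^ N ≠ 0 := pow_ne_zero _ (by simp [(Fact.out : p.Prime).ne_zero])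
  have hp0 : (0 : ℝ) < p := zero_lt_one.trans one_lt_cast_prime
  rw [show α - (a : ℚ_[p]) / (p : ℚ_[p]) ^ N = (α * (p : ℚ_[p]) ^ N - a) / (p : ℚ_[p]) ^ N by
    field_simp, norm_div, Padic.norm_p_pow, div_le_iff₀ (zpow_pos hp0 _), ← zpow_neg_one,
    ← zpow_add₀ hp0.ne']
  exact happr.trans_eq (congrArg _ (by push_cast; ring))

theorem exists_isIntegralPart (α : ℚ_[p]) : ∃ v : ℚ, IsIntegralPart p α v := by
  obtain ⟨N, a, ha, hnear⟩ := exists_natCast_div_pow_near α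
  have hp : 0 < p := (Fact.out : p.Prime).pos
  exact ⟨(a : ℚ) / (p : ℚ) ^ N, ⟨N, fun n => a / p ^ (N - n) % p, fun _ => Nat.mod_lt _ hp,
    natCast_div_pow_eq_sum_digits hp ha⟩, by push_cast; exact hnear⟩

theorem norm_sub_padicFloor_le (α : ℚ_[p]) : ‖α - (padicFloor p α : ℚ_[p])‖ ≤ (p : ℝ)⁻¹ := by
  rw [padicFloor, dif_pos (exists_isIntegralPart α)]
  exact (exists_isIntegralPart α).choose_spec.2

theorem norm_padicFloor_eq {α : ℚ_[p]} (hα : 1 ≤ ‖α‖) : ‖(padicFloor p α : ℚ_[p])‖ = ‖α‖ := by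
  have hsmall : ‖(padicFloor p α : ℚ_[p]) - α‖ < ‖α‖ := by
    rw [norm_sub_rev]
    exact (norm_sub_padicFloor_le α).trans_lt
      ((inv_lt_one_of_one_lt₀ one_lt_cast_prime).trans_le hα)
  rw [← add_sub_cancel α (padicFloor p α : ℚ_[p]), Padic.add_eq_max_of_ne hsmall.ne',
    max_eq_left hsmall.le]

theorem padicFloor_ne_zero_and_padicValRat_eq {α : ℚ_[p]} (hα : α ≠ 0)
    (hv : α.valuation ≤ 0) :
    padicFloor p α ≠ 0 ∧ padicValRat p (padicFloor p α) = α.valuation := by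
  have hnorm := norm_padicFloor_eq ((one_le_norm_iff_valuation_nonpos hα).mpr hv)
  have hne : (padicFloor p α : ℚ_[p]) ≠ 0 :=
    norm_ne_zero_iff.mp (hnorm ▸ norm_ne_zero_iff.mpr hα)
  exact ⟨Rat.cast_ne_zero.mp hne, Padic.valuation_ratCast (p := p) _ ▸
    valuation_eq_of_norm_eq hne hα hnorm⟩

theorem min_valuation_one_le_padicValRat_padicFloor {α : ℚ_[p]} (h : padicFloor p α ≠ 0) :
    min α.valuation 1 ≤ padicValRat p (padicFloor p α) := by
  rw [← Padic.valuation_ratCast]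
  set d := (padicFloor p α : ℚ_[p]) - α
  rcases eq_or_ne d 0 with hd | hd
  · rw [sub_eq_zero.mp hd]
    exact min_le_left _ _
  have hd1 : 1 ≤ d.valuation :=
    (norm_le_inv_iff_one_le_valuation hd).mp (norm_sub_rev α _ ▸ norm_sub_padicFloor_le α)
  calc min α.valuation 1 ≤ min α.valuation d.valuation := min_le_min_left _ hd1
    _ ≤ (α + d).valuation := Padic.le_valuation_add (by simpa [d] using h)
    _ = _ := by rw [add_sub_cancel]

theorem padicFloor_div_spec {a : ℚ} {w : ℚ_[p]} (ha : a ≠ 0) (hw : w ≠ 0)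
    (haw : padicValRat p a ≤ w.valuation) :
    padicFloor p (a / w) ≠ 0 ∧ padicValRat p (padicFloor p (a / w)) ≤ 0 ∧
      padicValRat p (a / padicFloor p (a / w)) = w.valuation := by
  have ha' : (a : ℚ_[p]) ≠ 0 := Rat.cast_ne_zero.mpr ha
  have hval : ((a : ℚ_[p]) / w).valuation = padicValRat p a - w.valuation := by
    rw [div_eq_mul_inv, Padic.valuation_mul ha' (inv_ne_zero hw), Padic.valuation_inv,
      Padic.valuation_ratCast, sub_eq_add_neg]
  obtain ⟨hq, hqv⟩ := padicFloor_ne_zero_and_padicValRat_eq (div_ne_zero ha' hw) (by omega)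
  exact ⟨hq, by omega, by rw [padicValRat.div ha hq]; omega⟩

theorem padicValRat_div_padicFloor_mul_div_lt {a : ℚ} {z w : ℚ_[p]} (ha : a ≠ 0) (hz : z ≠ 0)
    (hw : w ≠ 0) (haw : padicValRat p a < w.valuation) (hz1 : 1 ≤ z.valuation)
    (hq : padicFloor p (a * z / w) ≠ 0) :
    padicValRat p (a / padicFloor p (a * z / w)) < w.valuation := by
  have ha' : (a : ℚ_[p]) ≠ 0 := Rat.cast_ne_zero.mpr ha
  have hval :
      ((a : ℚ_[p]) * z / w).valuation = padicValRat p a + z.valuation - w.valuation := by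
    rw [div_eq_mul_inv, Padic.valuation_mul (mul_ne_zero ha' hz) (inv_ne_zero hw),
      Padic.valuation_mul ha' hz, Padic.valuation_inv, Padic.valuation_ratCast, sub_eq_add_neg]
  have hmin := min_valuation_one_le_padicValRat_padicFloor hq
  rw [padicValRat.div ha hq]
  omega

theorem ne_zero_of_mem_Dm {m : ℕ} {x : Fin m → ℚ_[p]} (hx : x ∈ Dm p m) (j : Fin m) :
    x j ≠ 0 := by
  intro hj
  have h := hx 0 (Pi.single j 1)
    (by simp [Pi.single_apply, apply_ite (Int.cast : ℤ → ℚ_[p]), hj])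
  simpa using h.2 j

theorem one_le_valuation_of_mem_Dm' {m : ℕ} {x : Fin m → ℚ_[p]} (hx : x ∈ Dm' p m)
    (j : Fin m) :
    1 ≤ (x j).valuation :=
  (norm_le_inv_iff_one_le_valuation (ne_zero_of_mem_Dm hx.1 j)).mp (hx.2 j)

section PParam

variable {m : ℕ} (ℓ : ℕ∞)

theorem pParam_ne_zero (x : Fin m → ℚ_[p]) (k : Fin m) : pParam p ℓ x k ≠ 0 := by
  have : (p : ℚ) ≠ 0 := Nat.cast_ne_zero.mpr (Fact.out : p.Prime).ne_zero
  unfold pParam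
  split_ifs
  exacts [one_ne_zero, zpow_ne_zero _ this, zpow_ne_zero _ this]

theorem padicValRat_pParam_nonneg (x : Fin m → ℚ_[p]) (k : Fin m) :
    0 ≤ padicValRat p (pParam p ℓ x k) := by
  unfold pParam
  split_ifs <;> simp only [padicValRat.one, padicValRat_prime_zpow, le_refl, le_max_right]

theorem padicValRat_pParam_le {x : Fin m → ℚ_[p]} {k : Fin m} (hk : (k : ℕ) + 1 = m)
    (hx : 0 ≤ (x ⟨0, k.pos⟩).valuation) :
    padicValRat p (pParam p ℓ x k) ≤ (x ⟨0, k.pos⟩).valuation := by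
  unfold pParam
  split_ifs <;> simp only [padicValRat.one, padicValRat_prime_zpow] <;> omega

theorem padicValRat_pParam_lt {x : Fin m → ℚ_[p]} {k : Fin m} (hk : (k : ℕ) + 1 ≠ m)
    (hx : ∀ j, 1 ≤ (x j).valuation) :
    padicValRat p (pParam p ℓ x k) < (x ⟨0, k.pos⟩).valuation := by
  have := hx ⟨0, k.pos⟩
  have := hx ⟨k + 1, by omega⟩
  unfold pParam
  split_ifs <;> simp only [padicValRat.one, padicValRat_prime_zpow] <;> omega

end PParam

end

theorem finRotate_inv_mk_zero {m : ℕ} (hm : 0 < m) :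
    (finRotate m)⁻¹ ⟨0, hm⟩ = ⟨m - 1, by omega⟩ := by
  obtain ⟨n, rfl⟩ : ∃ n, m = n + 1 := ⟨m - 1, by omega⟩
  exact (Equiv.Perm.inv_eq_iff_eq).mpr finRotate_last'.symm

theorem param_hyperbolic (m : ℕ) (hm : 0 < m) (ℓ : ℕ∞) (x : Fin m → ℚ_[p])
    (hx : x ∈ Dm' p m) :
    Hyperbolic p ⟨0, hm⟩ (finRotate m) (pParam p ℓ x) (qParam p ℓ x) := by
  have hx0 := ne_zero_of_mem_Dm hx.1
  have hx1 := one_le_valuation_of_mem_Dm' hx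
  set s : Fin m := ⟨m - 1, by omega⟩
  have hs : (s : ℕ) + 1 = m := Nat.sub_add_cancel hm
  have hne : ∀ k, k ≠ s → (k : ℕ) + 1 ≠ m := fun k hk h =>
    hk (Fin.ext (show (k : ℕ) = m - 1 by omega))
  have hqs : qParam p ℓ x s = padicFloor p (pParam p ℓ x s / x ⟨0, hm⟩) := dif_pos hs
  obtain ⟨hqs0, hqs_le, hps_div_qs⟩ := hqs ▸ padicFloor_div_spec (pParam_ne_zero ℓ x s) (hx0 _)
    (padicValRat_pParam_le ℓ hs (zero_le_one.trans (hx1 _)))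
  rw [Hyperbolic, finRotate_inv_mk_zero hm, hps_div_qs]
  refine ⟨fun k => ⟨pParam_ne_zero ℓ x k, padicValRat_pParam_nonneg ℓ x k⟩,
    ⟨hqs0, hqs_le, hx1 _⟩, fun k hk hqk _ => ?_,
    fun k hk _ => padicValRat_pParam_lt ℓ (hne k hk) hx1⟩
  have hqk_def : qParam p ℓ x k =
      padicFloor p (pParam p ℓ x k * x ⟨k + 1, by omega⟩ / x ⟨0, hm⟩) := dif_neg (hne k hk)
  rw [hqk_def] at hqk ⊢
  exact padicValRat_div_padicFloor_mul_div_lt (pParam_ne_zero ℓ x k) (hx0 _) (hx0 _)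
    (padicValRat_pParam_lt ℓ (hne k hk) hx1) (hx1 _) hqk

end PadicCF
end
end
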